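/- Let (U, S_1, ..., S_m) be a finite set system, let A_e ≥ 0 be a weight for each element e ∈ U, and let x ∈ [0,1]^m. Define the multilinear extension G(x) = Σ_{e∈U} A_e · (1 - ∏_{i : e ∈ S_i} (1 - x_i)) and the extension g̃(x) = Σ_{e∈U} A_e · min{1, Σ_{i : e ∈ S_i} x_i}. Then G(x) ≥ (1 - 1/e) · g̃(x). -/

import Mathlib

/-!
Both extensions are sums over elements, so it suffices to compare the summands for each `e`.
With `s = ∑_{i : e ∈ S i} x i`, the product `∏ (1 - x i)` is at most `exp (-s)` since
`1 - t ≤ exp (-t)`, and `1 - exp (-s)` dominates `(1 - 1/e) · min 1 s`: for `s ≥ 1` by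
monotonicity, and for `s ≤ 1` because the concave function `1 - exp (-s)` lies above its
chord from `0` to `1`.
-/

open Finset

lemma Real.prod_one_sub_le_exp_neg_sum {ι : Type*} (t : Finset ι) (x : ι → ℝ)
    (hx : ∀ i ∈ t, x i ≤ 1) :
    ∏ i ∈ t, (1 - x i) ≤ Real.exp (-∑ i ∈ t, x i) := by
  rw [← sum_neg_distrib, Real.exp_sum]
  exact prod_le_prod (fun i hi => sub_nonneg.2 (hx i hi)) fun i _ => Real.one_sub_le_exp_neg _

lemma Real.exp_neg_le_one_sub_mul_of_le_one {s : ℝ} (h0 : 0 ≤ s) (h1 : s ≤ 1) :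
    Real.exp (-s) ≤ 1 - (1 - Real.exp (-1)) * s := by
  have := convexOn_exp.2 (Set.mem_univ 0) (Set.mem_univ (-1)) (sub_nonneg.2 h1) h0
    (sub_add_cancel 1 s)
  simp only [smul_eq_mul, mul_zero, mul_neg_one, zero_add, Real.exp_zero] at this
  linarith

lemma Real.one_sub_inv_exp_mul_min_le_one_sub_exp_neg {s : ℝ} (hs : 0 ≤ s) :
    (1 - 1 / Real.exp 1) * min 1 s ≤ 1 - Real.exp (-s) := by
  have hinv : 1 / Real.exp 1 = Real.exp (-1) := by rw [Real.exp_neg, one_div]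
  rw [hinv]
  rcases le_total s 1 with h | h
  · rw [min_eq_right h]
    linarith [Real.exp_neg_le_one_sub_mul_of_le_one hs h]
  · rw [min_eq_left h, mul_one]
    linarith [Real.exp_le_exp.2 (neg_le_neg h)]

lemma one_sub_inv_exp_mul_min_sum_le_one_sub_prod {ι : Type*} (t : Finset ι) (x : ι → ℝ)
    (hx : ∀ i ∈ t, x i ∈ Set.Icc (0 : ℝ) 1) :
    (1 - 1 / Real.exp 1) * min 1 (∑ i ∈ t, x i) ≤ 1 - ∏ i ∈ t, (1 - x i) :=
  calc (1 - 1 / Real.exp 1) * min 1 (∑ i ∈ t, x i)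
      ≤ 1 - Real.exp (-∑ i ∈ t, x i) :=
        Real.one_sub_inv_exp_mul_min_le_one_sub_exp_neg (sum_nonneg fun i hi => (hx i hi).1)
    _ ≤ 1 - ∏ i ∈ t, (1 - x i) :=
        sub_le_sub_left (Real.prod_one_sub_le_exp_neg_sum t x fun i hi => (hx i hi).2) 1

/-- For a weighted coverage function, the multilinear extension `G`
dominates `(1 - 1/e)` times the concave-closure extension `g̃`. -/
theorem multilinear_ge_concave_closure_coverage
    {α : Type*} [Fintype α] [DecidableEq α] {m : ℕ}
    (S : Fin m → Finset α) (A : α → ℝ) (hA : ∀ e, 0 ≤ A e)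
    (x : Fin m → ℝ) (hx : ∀ i, x i ∈ Set.Icc (0:ℝ) 1) :
    (1 - 1 / Real.exp 1) *
        (∑ e, A e * min 1 (∑ i ∈ Finset.univ.filter (fun i => e ∈ S i), x i)) ≤
      ∑ e, A e * (1 - ∏ i ∈ Finset.univ.filter (fun i => e ∈ S i), (1 - x i)) := by
  rw [mul_sum]
  refine sum_le_sum fun e _ => ?_
  rw [mul_left_comm]
  exact mul_le_mul_of_nonneg_left
    (one_sub_inv_exp_mul_min_sum_le_one_sub_prod _ x fun i _ => hx i) (hA e)
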